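/- Let μ, λ, r be real numbers with r > 1, and let u : ℝ³ → ℝ³ be differentiable at a point x with u(x) ≠ 0. Write a = |u(x)|, D = div(u/|u|)(x), g = ∇|u|(x), and s = u(x)·g. Then μ a² |∇u(x)|² + (λ+μ) a² (div u(x))² + μ(r−2) a² |g|² + (r−2)(μ+λ) a² s D + (r−2)(μ+λ) s² = μ a⁴ |∇(u/|u|)(x)|² + μ(r−1) a² |g|² + (r−1)(μ+λ) (s + (r/(2(r−1))) a² D)² + (μ+λ)(1 − r²/(4(r−1))) a⁴ D². -/

import Mathlib

/-!
Write `a = ‖u x‖`, `w = u / ‖u‖` and `g = ∇‖u‖(x)`. Differentiating `‖u‖² = ⟪u, u⟫` gives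
`(∇u)ᵀ u = a g`, and `∇w = ∇u / a - u ⊗ g / a²`. Together these give
`a⁴ |∇w|² = a² (|∇u|² - |g|²)` and `a² div w = a div u - ⟪u, g⟫`. Substituting them, the identity
reduces to completing the square `(r - 1) s² + r s t + t²` in `s = ⟪u, g⟫` with `t = a² div w`,
which is possible because `r ≠ 1`.
-/

open scoped RealInnerProductSpace

noncomputable section

/-- ℝ³ as a Euclidean space. -/
abbrev E3 : Type := EuclideanSpace ℝ (Fin 3)

/-- The (i,j) entry of the Jacobian matrix ∇u(x) of a map u : ℝ³ → ℝ³. -/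
def jacEntry (u : E3 → E3) (x : E3) (i j : Fin 3) : ℝ :=
  fderiv ℝ u x (EuclideanSpace.single j 1) i

/-- The squared Frobenius (Hilbert–Schmidt) norm |∇u(x)|² of the Jacobian of u at x. -/
def frobSq (u : E3 → E3) (x : E3) : ℝ :=
  ∑ i, ∑ j, (jacEntry u x i j) ^ 2

/-- The divergence div u(x) = tr(∇u(x)). -/
def divg (u : E3 → E3) (x : E3) : ℝ :=
  ∑ i, jacEntry u x i i

section NormalizedField

variable {E F : Type*} [NormedAddCommGroup E] [NormedSpace ℝ E]
  [NormedAddCommGroup F] [InnerProductSpace ℝ F] {u : E → F} {x : E}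

theorem inner_fderiv_eq_norm_mul_fderiv_norm (hu : DifferentiableAt ℝ u x) (hx : u x ≠ 0)
    (v : E) : ⟪u x, fderiv ℝ u x v⟫ = ‖u x‖ * fderiv ℝ (fun y => ‖u y‖) x v := by
  have h := congrArg (· v) (hu.hasFDerivAt.norm_sq.unique ((hu.norm ℝ hx).hasFDerivAt.pow 2))
  simp only [smul_apply, ContinuousLinearMap.comp_apply, coe_innerSL_apply,
    nsmul_eq_mul, Nat.cast_ofNat, Nat.add_one_sub_one, pow_one, smul_eq_mul] at h
  linarith

theorem fderiv_inv_norm_smul_apply (hu : DifferentiableAt ℝ u x) (hx : u x ≠ 0) (v : E) :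
    fderiv ℝ (fun y => ‖u y‖⁻¹ • u y) x v
      = ‖u x‖⁻¹ • fderiv ℝ u x v - ((‖u x‖ ^ 2)⁻¹ * fderiv ℝ (fun y => ‖u y‖) x v) • u x := by
  have hinv : HasFDerivAt (fun y => ‖u y‖⁻¹) ((ContinuousLinearMap.toSpanSingleton ℝ
      (-(‖u x‖ ^ 2)⁻¹)).comp (fderiv ℝ (fun y => ‖u y‖) x)) x :=
    (hasFDerivAt_inv (norm_ne_zero_iff.mpr hx)).comp x (hu.norm ℝ hx).hasFDerivAt
  rw [(hinv.fun_smul hu.hasFDerivAt).fderiv]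
  simp [sub_eq_add_neg, neg_smul, mul_comm]

theorem norm_sq_fderiv_inv_norm_smul_apply (hu : DifferentiableAt ℝ u x) (hx : u x ≠ 0)
    (v : E) :
    ‖u x‖ ^ 4 * ‖fderiv ℝ (fun y => ‖u y‖⁻¹ • u y) x v‖ ^ 2
      = ‖u x‖ ^ 2 * (‖fderiv ℝ u x v‖ ^ 2 - fderiv ℝ (fun y => ‖u y‖) x v ^ 2) := by
  have ha : ‖u x‖ ≠ 0 := norm_ne_zero_iff.mpr hx
  rw [fderiv_inv_norm_smul_apply hu hx, norm_sub_sq_real, norm_smul, norm_smul,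
    inner_smul_left, inner_smul_right, real_inner_comm,
    inner_fderiv_eq_norm_mul_fderiv_norm hu hx]
  simp only [Real.norm_eq_abs, abs_inv, abs_mul, abs_norm, abs_pow, mul_pow, sq_abs, conj_trivial]
  field_simp
  ring

end NormalizedField

section Euclidean

variable {ι : Type*} [Fintype ι] [DecidableEq ι]

theorem fderiv_apply_single_eq_gradient (f : EuclideanSpace ℝ ι → ℝ) (x : EuclideanSpace ℝ ι)
    (j : ι) : fderiv ℝ f x (EuclideanSpace.single j 1) = gradient f x j := by
  rw [← InnerProductSpace.toDual_symm_apply, EuclideanSpace.inner_single_right]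
  simp [gradient]

theorem norm_sq_gradient_eq_sum (f : EuclideanSpace ℝ ι → ℝ) (x : EuclideanSpace ℝ ι) :
    ‖gradient f x‖ ^ 2 = ∑ j, fderiv ℝ f x (EuclideanSpace.single j 1) ^ 2 := by
  simp [EuclideanSpace.norm_sq_eq, fderiv_apply_single_eq_gradient]

end Euclidean

section Jacobian

variable {u : E3 → E3} {x : E3}

theorem frobSq_eq_sum_norm_sq (u : E3 → E3) (x : E3) :
    frobSq u x = ∑ j, ‖fderiv ℝ u x (EuclideanSpace.single j 1)‖ ^ 2 := by
  simp only [frobSq, jacEntry, EuclideanSpace.norm_sq_eq, Real.norm_eq_abs, sq_abs]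
  exact Finset.sum_comm

theorem frobSq_inv_norm_smul (hu : DifferentiableAt ℝ u x) (hx : u x ≠ 0) :
    ‖u x‖ ^ 4 * frobSq (fun y => ‖u y‖⁻¹ • u y) x
      = ‖u x‖ ^ 2 * (frobSq u x - ‖gradient (fun y => ‖u y‖) x‖ ^ 2) := by
  simp only [frobSq_eq_sum_norm_sq, norm_sq_gradient_eq_sum, ← Finset.sum_sub_distrib,
    Finset.mul_sum, norm_sq_fderiv_inv_norm_smul_apply hu hx]

theorem divg_inv_norm_smul (hu : DifferentiableAt ℝ u x) (hx : u x ≠ 0) :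
    ‖u x‖ ^ 2 * divg (fun y => ‖u y‖⁻¹ • u y) x
      = ‖u x‖ * divg u x - ⟪u x, gradient (fun y => ‖u y‖) x⟫ := by
  have ha : ‖u x‖ ≠ 0 := norm_ne_zero_iff.mpr hx
  simp only [divg, jacEntry, fderiv_inv_norm_smul_apply hu hx, fderiv_apply_single_eq_gradient,
    PiLp.inner_apply, Finset.mul_sum, ← Finset.sum_sub_distrib]
  refine Finset.sum_congr rfl fun i _ => ?_
  simp only [PiLp.sub_apply, PiLp.smul_apply, smul_eq_mul, RCLike.inner_apply, Real.ringHom_apply]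
  field_simp

end Jacobian

theorem complete_square_of_ne_one (r s t : ℝ) (hr : r ≠ 1) :
    (r - 1) * (s + r / (2 * (r - 1)) * t) ^ 2 + (1 - r ^ 2 / (4 * (r - 1))) * t ^ 2
      = (r - 1) * s ^ 2 + r * s * t + t ^ 2 := by
  have : r - 1 ≠ 0 := sub_ne_zero.mpr hr
  field_simp
  ring

/-- Algebraic decomposition of the quadratic form G in the weighted energy estimate:
for r > 1 and u differentiable at x with u(x) ≠ 0, writing
a = |u(x)|, D = div(u/|u|)(x), g = ∇|u|(x), s = u(x)·g, one has
μ a² |∇u(x)|² + (λ+μ) a² (div u(x))² + μ(r−2) a² |g|² + (r−2)(μ+λ) a² s D + (r−2)(μ+λ) s²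
= μ a⁴ |∇(u/|u|)(x)|² + μ(r−1) a² |g|² + (r−1)(μ+λ) (s + (r/(2(r−1))) a² D)²
  + (μ+λ)(1 − r²/(4(r−1))) a⁴ D². -/
theorem quadratic_form_decomposition (μ lam r : ℝ) (hr : 1 < r)
    (u : E3 → E3) (x : E3)
    (hu : DifferentiableAt ℝ u x) (hx : u x ≠ 0) :
    μ * ‖u x‖ ^ 2 * frobSq u x
      + (lam + μ) * ‖u x‖ ^ 2 * (divg u x) ^ 2
      + μ * (r - 2) * ‖u x‖ ^ 2 * ‖gradient (fun y => ‖u y‖) x‖ ^ 2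
      + (r - 2) * (μ + lam) * ‖u x‖ ^ 2
          * ⟪u x, gradient (fun y => ‖u y‖) x⟫
          * divg (fun y => ‖u y‖⁻¹ • u y) x
      + (r - 2) * (μ + lam) * ⟪u x, gradient (fun y => ‖u y‖) x⟫ ^ 2
      = μ * ‖u x‖ ^ 4 * frobSq (fun y => ‖u y‖⁻¹ • u y) x
        + μ * (r - 1) * ‖u x‖ ^ 2 * ‖gradient (fun y => ‖u y‖) x‖ ^ 2
        + (r - 1) * (μ + lam)
            * (⟪u x, gradient (fun y => ‖u y‖) x⟫
                + (r / (2 * (r - 1))) * ‖u x‖ ^ 2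
                    * divg (fun y => ‖u y‖⁻¹ • u y) x) ^ 2
        + (μ + lam) * (1 - r ^ 2 / (4 * (r - 1))) * ‖u x‖ ^ 4
            * (divg (fun y => ‖u y‖⁻¹ • u y) x) ^ 2 := by
  set a := ‖u x‖
  set s := ⟪u x, gradient (fun y => ‖u y‖) x⟫
  set D := divg (fun y => ‖u y‖⁻¹ • u y) x
  have hD : a ^ 2 * D = a * divg u x - s := divg_inv_norm_smul hu hx
  have hF := frobSq_inv_norm_smul hu hx
  have hsq := complete_square_of_ne_one r s (a ^ 2 * D) hr.ne'
  linear_combination (-μ) * hF - (μ + lam) * hsq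
    - (μ + lam) * (a ^ 2 * D + s + a * divg u x) * hD

end
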